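/- For every instance with two agents having equal entitlements, nonempty signal sets S₁, S₂, and valuations v₁, v₂ : (S₁×S₂) × 2^M → ℝ≥0 that are monotone and normalized in the set argument for every fixed signal vector, there exists an allocation mechanism 𝓜 (with some bid sets B₁, B₂) such that for every true signal vector s ∈ S₁×S₂ there exists a report vector ((r₁,b₁),(r₂,b₂)) that: (1) is a pure Nash equilibrium; (2) induces an allocation that gives agent 1 at least her MMS with respect to s and is EFX for agent 1 with respect to s; and (3) is EF for agent 2 with respect to s. -/

import Mathlib

/-! Cut and choose. Agent 1 cuts `M` into `X, Xᶜ` with `X` lexicographically maximizing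
`(v₁ X, #X)` among the cuts whose side `X` is the one she values less; then `v₁ X` is her maximin
share, and maximality of `#X` makes `Xᶜ` an EFX bundle for her against `X`. Agent 2 picks the
side she prefers at `X`, so she is envy-free; at every other cut she takes the side agent 1
prefers, so a deviating agent 1 gets at most `min (v₁ T) (v₁ Tᶜ) ≤ v₁ X`. Both agents report
their signals truthfully, so every payoff is evaluated at the true signals. -/

/-- The maximin share of a valuation `v` on subsets of a finite set `M`,
for two agents with equal entitlements: `MMS(v) = max_{T ⊆ M} min (v T) (v Tᶜ)`. -/
noncomputable def mms2 {M : Type*} [Fintype M] [DecidableEq M] (v : Finset M → ℝ) : ℝ :=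
  (Finset.univ : Finset (Finset M)).sup' ⟨∅, Finset.mem_univ ∅⟩ fun T => min (v T) (v Tᶜ)

section

open Finset

variable {M : Type*} [Fintype M] [DecidableEq M]

theorem exists_maximin_cut_efx (v : Finset M → ℝ) (hv : Monotone v) :
    ∃ X : Finset M, v X ≤ v Xᶜ ∧ (∀ T, min (v T) (v Tᶜ) ≤ v X) ∧
      ∀ j ∈ Xᶜ, v (Xᶜ \ {j}) ≤ v X := by
  obtain ⟨X, hX, hmax⟩ := exists_max_image {T | v T ≤ v Tᶜ} (fun T => toLex (v T, #T))
    ⟨∅, by simpa using hv (empty_subset _)⟩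
  simp only [mem_filter, mem_univ, true_and] at hX hmax
  have hle : ∀ T, v T ≤ v Tᶜ → v T ≤ v X := fun T hT =>
    (Prod.Lex.toLex_le_toLex.1 (hmax T hT)).elim le_of_lt fun h => h.1.le
  have hmin : ∀ T, min (v T) (v Tᶜ) ≤ v X := by
    intro T
    rcases le_total (v T) (v Tᶜ) with h | h
    · exact (min_le_left _ _).trans (hle T h)
    · exact (min_le_right _ _).trans (hle Tᶜ (by rwa [compl_compl]))
  refine ⟨X, hX, hmin, fun j hj => ?_⟩
  by_contra! hlt
  have hcompl : (insert j X)ᶜ = Xᶜ \ {j} := by rw [compl_insert, erase_eq]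
  have hins : v (insert j X) = v X := by
    refine le_antisymm ?_ (hv (subset_insert _ _))
    have := hmin (insert j X)
    rw [hcompl] at this
    exact (min_le_iff.1 this).resolve_right hlt.not_ge
  have := hmax (insert j X) (by rw [hcompl, hins]; exact hlt.le)
  rw [Prod.Lex.toLex_le_toLex, hins, card_insert_of_notMem (mem_compl.1 hj)] at this
  simp at this

/-- Agent 2's bundle when agent 1 cuts `T` and agent 2 takes `T` iff `take`. -/
def cutChoose (T : Finset M) (take : Bool) : Finset M := bif take then T else Tᶜ

theorem compl_cutChoose (T : Finset M) (b : Bool) : (cutChoose T b)ᶜ = cutChoose T !b := by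
  cases b <;> simp [cutChoose]

theorem apply_cutChoose_le_apply_cutChoose_decide (v : Finset M → ℝ) (T : Finset M) (b : Bool) :
    v (cutChoose T b) ≤ v (cutChoose T (decide (v Tᶜ ≤ v T))) := by
  by_cases h : v Tᶜ ≤ v T <;> cases b <;> simp [cutChoose, h, le_of_not_ge]

theorem apply_compl_cutChoose_decide (v : Finset M → ℝ) (T : Finset M) :
    v (cutChoose T (decide (v Tᶜ ≤ v T)))ᶜ = min (v T) (v Tᶜ) := by
  by_cases h : v Tᶜ ≤ v T
  · simp [cutChoose, h]
  · simp [cutChoose, h, min_eq_left (le_of_not_ge h)]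

theorem apply_le_apply_compl_cutChoose {v : Finset M → ℝ} {X : Finset M} (hX : v X ≤ v Xᶜ)
    (b : Bool) : v X ≤ v (cutChoose X b)ᶜ := by
  cases b <;> simp [cutChoose, hX]

noncomputable def choiceRule (u w : Finset M → ℝ) (X : Finset M) (T : Finset M) : Bool :=
  if T = X then decide (w Xᶜ ≤ w X) else decide (u Tᶜ ≤ u T)

theorem exists_fair_equilibrium (u w : Finset M → ℝ) (hu : Monotone u) :
    ∃ (X : Finset M) (choice : Finset M → Bool),
      (∀ T, u (cutChoose T (choice T))ᶜ ≤ u (cutChoose X (choice X))ᶜ) ∧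
      (∀ b, w (cutChoose X b) ≤ w (cutChoose X (choice X))) ∧
      mms2 u ≤ u (cutChoose X (choice X))ᶜ ∧
      (∀ j ∈ cutChoose X (choice X),
        u (cutChoose X (choice X) \ {j}) ≤ u (cutChoose X (choice X))ᶜ) ∧
      w (cutChoose X (choice X))ᶜ ≤ w (cutChoose X (choice X)) := by
  obtain ⟨X, hX, hmin, hefx⟩ := exists_maximin_cut_efx u hu
  have hchoiceX : choiceRule u w X X = decide (w Xᶜ ≤ w X) := if_pos rfl
  have hagent1 := apply_le_apply_compl_cutChoose hX (choiceRule u w X X)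
  refine ⟨X, choiceRule u w X, fun T => ?_, fun b => ?_, ?_, fun j hj => ?_, ?_⟩
  · by_cases hT : T = X
    · rw [hT]
    · rw [choiceRule, if_neg hT, apply_compl_cutChoose_decide u T]
      exact (hmin T).trans hagent1
  · rw [hchoiceX]
    exact apply_cutChoose_le_apply_cutChoose_decide w X b
  · exact (sup'_le _ _ fun T _ => hmin T).trans hagent1
  · rw [hchoiceX] at hj ⊢
    by_cases h : w Xᶜ ≤ w X
    · simp only [cutChoose, h, decide_true, cond_true] at hj ⊢
      exact (hu sdiff_subset).trans hX
    · simp only [cutChoose, h, decide_false, cond_false, compl_compl] at hj ⊢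
      exact hefx j hj
  · rw [hchoiceX, compl_cutChoose]
    exact apply_cutChoose_le_apply_cutChoose_decide w X _

end

theorem exists_fair_PNE_mechanism_equal_entitlements.{u}
    {M : Type*} [Fintype M] [DecidableEq M] {S1 S2 : Type u}
    [Nonempty S1] [Nonempty S2]
    (v1 v2 : S1 × S2 → Finset M → ℝ)
    (h1mono : ∀ (σ : S1 × S2) (T T' : Finset M), T ⊆ T' → v1 σ T ≤ v1 σ T')
    (h1norm : ∀ σ : S1 × S2, v1 σ ∅ = 0)
    (h1nonneg : ∀ (σ : S1 × S2) (T : Finset M), 0 ≤ v1 σ T)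
    (h2mono : ∀ (σ : S1 × S2) (T T' : Finset M), T ⊆ T' → v2 σ T ≤ v2 σ T')
    (h2norm : ∀ σ : S1 × S2, v2 σ ∅ = 0)
    (h2nonneg : ∀ (σ : S1 × S2) (T : Finset M), 0 ≤ v2 σ T) :
    ∃ (B1 B2 : Type u) (𝓜 : S1 × B1 → S2 × B2 → Finset M),
      ∀ (s1 : S1) (s2 : S2),
        ∃ (r1 : S1) (b1 : B1) (r2 : S2) (b2 : B2),
          -- (1) `((r1,b1),(r2,b2))` is a pure Nash equilibrium w.r.t. `(s1,s2)`
          (∀ (r1' : S1) (b1' : B1),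
              v1 (s1, r2) ((𝓜 (r1', b1') (r2, b2))ᶜ) ≤
                v1 (s1, r2) ((𝓜 (r1, b1) (r2, b2))ᶜ)) ∧
          (∀ (r2' : S2) (b2' : B2),
              v2 (r1, s2) (𝓜 (r1, b1) (r2', b2')) ≤
                v2 (r1, s2) (𝓜 (r1, b1) (r2, b2))) ∧
          -- (2) agent 1 gets at least her MMS, and the allocation is EFX for agent 1
          mms2 (v1 (s1, s2)) ≤ v1 (s1, s2) ((𝓜 (r1, b1) (r2, b2))ᶜ) ∧
          (∀ j ∈ 𝓜 (r1, b1) (r2, b2),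
              v1 (s1, s2) (𝓜 (r1, b1) (r2, b2) \ {j}) ≤
                v1 (s1, s2) ((𝓜 (r1, b1) (r2, b2))ᶜ)) ∧
          -- (3) the allocation is EF for agent 2
          v2 (s1, s2) ((𝓜 (r1, b1) (r2, b2))ᶜ) ≤
            v2 (s1, s2) (𝓜 (r1, b1) (r2, b2)) := by
  let cut := (equivShrink.{u} (Finset M)).symm
  let choice := (equivShrink.{u} (Finset M → Bool)).symm
  refine ⟨Shrink (Finset M), Shrink (Finset M → Bool),
    fun p q => cutChoose (cut p.2) (choice q.2 (cut p.2)), fun s1 s2 => ?_⟩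
  obtain ⟨X, f, hpne1, hpne2, hmms, hefx, hef⟩ :=
    exists_fair_equilibrium (v1 (s1, s2)) (v2 (s1, s2)) (h1mono (s1, s2))
  refine ⟨s1, equivShrink _ X, s2, equivShrink _ f, ?_⟩
  simp only [cut, choice, Equiv.symm_apply_apply]
  exact ⟨fun _ _ => hpne1 _, fun _ _ => hpne2 _, hmms, hefx, hef⟩
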